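/- There is a ring homomorphism ρ : Λ → M₂(𝔽₂) (2×2 matrices over the field with two elements) with ρ(ω) the matrix with rows (0,1),(1,1) and ρ(y) the matrix with rows (0,1),(1,0); moreover there is a group homomorphism σ₂ : Λ^{N=1} → ℤ/2 (obtained from ρ by composing with the sign of the permutation action of GL₂(𝔽₂) on (𝔽₂)²) satisfying σ₂(h) = 1, σ₂(γ) = 0, and σ₂(−1) = 0. In particular σ₂ is a nontrivial homomorphism. -/

import Mathlib

open Quaternion

noncomputable section

set_option linter.unnecessarySeqFocus false

/-- `x = i` in `D = ℍ[ℚ, -3, 5]`. -/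
def qx : ℍ[ℚ, -3, 5] := ⟨0, 1, 0, 0⟩
/-- `y = j` in `D = ℍ[ℚ, -3, 5]`. -/
def qy : ℍ[ℚ, -3, 5] := ⟨0, 0, 1, 0⟩
/-- `ω = (−1 + x)/2`. -/
def qω : ℍ[ℚ, -3, 5] := (2 : ℚ)⁻¹ • (-1 + qx)
/-- `h = 4 + x·y`. -/
def qh : ℍ[ℚ, -3, 5] := 4 + qx * qy
/-- `γ = 4 + 5ω² − 2y`. -/
def qγ : ℍ[ℚ, -3, 5] := 4 + 5 * qω ^ 2 - 2 * qy

/-- The maximal order `Λ = ℤ⟨ω, y⟩ ⊆ D`, the subring generated by `ω` and `y`. -/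
def Λ : Subring ℍ[ℚ, -3, 5] := Subring.closure {qω, qy}

lemma qω_mem : qω ∈ Λ := Subring.subset_closure (Set.mem_insert _ _)
lemma qy_mem : qy ∈ Λ := Subring.subset_closure (Set.mem_insert_of_mem _ rfl)

lemma qx_mem : qx ∈ Λ := by
  have hx : qx = qω + qω + 1 := by ext <;> simp [qω, qx] <;> norm_num
  rw [hx]
  exact Subring.add_mem _ (Subring.add_mem _ qω_mem qω_mem) (Subring.one_mem _)

lemma qh_mem : qh ∈ Λ := by
  have h4 : (4 : ℍ[ℚ, -3, 5]) ∈ Λ := by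
    have : (4 : ℍ[ℚ, -3, 5]) = ((4 : ℕ) : ℍ[ℚ, -3, 5]) := by norm_cast
    rw [this]; exact natCast_mem Λ 4
  exact Subring.add_mem _ h4 (Subring.mul_mem _ qx_mem qy_mem)

lemma qγ_mem : qγ ∈ Λ := by
  have h4 : (4 : ℍ[ℚ, -3, 5]) ∈ Λ := by
    have : (4 : ℍ[ℚ, -3, 5]) = ((4 : ℕ) : ℍ[ℚ, -3, 5]) := by norm_cast
    rw [this]; exact natCast_mem Λ 4
  have h5 : (5 : ℍ[ℚ, -3, 5]) ∈ Λ := by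
    have : (5 : ℍ[ℚ, -3, 5]) = ((5 : ℕ) : ℍ[ℚ, -3, 5]) := by norm_cast
    rw [this]; exact natCast_mem Λ 5
  have h2 : (2 : ℍ[ℚ, -3, 5]) ∈ Λ := by
    have : (2 : ℍ[ℚ, -3, 5]) = ((2 : ℕ) : ℍ[ℚ, -3, 5]) := by norm_cast
    rw [this]; exact natCast_mem Λ 2
  exact Subring.sub_mem _
    (Subring.add_mem _ h4 (Subring.mul_mem _ h5 (by rw [pow_two]; exact Subring.mul_mem _ qω_mem qω_mem)))
    (Subring.mul_mem _ h2 qy_mem)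

lemma star_mem_Λ {a : ℍ[ℚ, -3, 5]} (ha : a ∈ Λ) : star a ∈ Λ := by
  induction ha using Subring.closure_induction with
  | mem x hx =>
      rcases hx with hx | hx
      · subst hx
        have : star qω = -1 - qω := by ext <;> simp [qω, qx] <;> norm_num
        rw [this]
        exact Subring.sub_mem _ (Subring.neg_mem _ (Subring.one_mem _)) qω_mem
      · rw [Set.mem_singleton_iff] at hx
        subst hx
        have : star qy = -qy := by ext <;> simp [qy]
        rw [this]
        exact Subring.neg_mem _ qy_mem
  | zero => simpa using Subring.zero_mem Λ
  | one => simpa using Subring.one_mem Λ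
  | add x y hx hy px py => rw [star_add]; exact Subring.add_mem _ px py
  | neg x hx px => rw [star_neg]; exact Subring.neg_mem _ px
  | mul x y hx hy px py => rw [star_mul]; exact Subring.mul_mem _ py px

/-- The norm-one units `Λ^{N=1}` of the order `Λ`, as a subgroup of the unit group of `D`. -/
def N1 : Subgroup (ℍ[ℚ, -3, 5])ˣ where
  carrier := {u | (u : ℍ[ℚ, -3, 5]) ∈ Λ ∧ (u : ℍ[ℚ, -3, 5]) * star (u : ℍ[ℚ, -3, 5]) = 1}
  one_mem' := ⟨Subring.one_mem _, by simp⟩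
  mul_mem' := by
    rintro a b ⟨haΛ, ha⟩ ⟨hbΛ, hb⟩
    refine ⟨Subring.mul_mem _ haΛ hbΛ, ?_⟩
    rw [Units.val_mul, star_mul, mul_assoc, ← mul_assoc (b : ℍ[ℚ, -3, 5]), hb, one_mul, ha]
  inv_mem' := by
    rintro u ⟨huΛ, hu⟩
    have hinv : ((u⁻¹ : (ℍ[ℚ, -3, 5])ˣ) : ℍ[ℚ, -3, 5]) = star (u : ℍ[ℚ, -3, 5]) :=
      Units.inv_eq_of_mul_eq_one_right hu
    refine ⟨by rw [hinv]; exact star_mem_Λ huΛ, ?_⟩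
    rw [hinv, star_star, ← hinv, Units.inv_mul]

lemma qω_norm : qω * star qω = 1 := by ext <;> simp [qω, qx] <;> norm_num
lemma qω_norm' : star qω * qω = 1 := by ext <;> simp [qω, qx] <;> norm_num
lemma qh_norm : qh * star qh = 1 := by
  have h4 : ((4 : ℚ) : ℍ[ℚ, -3, 5]) = 4 := by norm_cast
  ext <;> simp [qh, qx, qy, QuaternionAlgebra.re_ofNat, QuaternionAlgebra.imI_ofNat, QuaternionAlgebra.imJ_ofNat, QuaternionAlgebra.imK_ofNat] <;> norm_num
lemma qh_norm' : star qh * qh = 1 := by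
  have h4 : ((4 : ℚ) : ℍ[ℚ, -3, 5]) = 4 := by norm_cast
  ext <;> simp [qh, qx, qy, QuaternionAlgebra.re_ofNat, QuaternionAlgebra.imI_ofNat, QuaternionAlgebra.imJ_ofNat, QuaternionAlgebra.imK_ofNat] <;> norm_num
lemma qγ_norm : qγ * star qγ = 1 := by
  have h4 : ((4 : ℚ) : ℍ[ℚ, -3, 5]) = 4 := by norm_cast
  have h5 : ((5 : ℚ) : ℍ[ℚ, -3, 5]) = 5 := by norm_cast
  have h2 : ((2 : ℚ) : ℍ[ℚ, -3, 5]) = 2 := by norm_cast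
  ext <;> simp [qγ, qω, qx, qy, pow_two, QuaternionAlgebra.re_ofNat, QuaternionAlgebra.imI_ofNat, QuaternionAlgebra.imJ_ofNat, QuaternionAlgebra.imK_ofNat] <;> norm_num
lemma qγ_norm' : star qγ * qγ = 1 := by
  have h4 : ((4 : ℚ) : ℍ[ℚ, -3, 5]) = 4 := by norm_cast
  have h5 : ((5 : ℚ) : ℍ[ℚ, -3, 5]) = 5 := by norm_cast
  have h2 : ((2 : ℚ) : ℍ[ℚ, -3, 5]) = 2 := by norm_cast
  ext <;> simp [qγ, qω, qx, qy, pow_two, QuaternionAlgebra.re_ofNat, QuaternionAlgebra.imI_ofNat, QuaternionAlgebra.imJ_ofNat, QuaternionAlgebra.imK_ofNat] <;> norm_num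

/-- `ω` as an element of `Λ^{N=1}`. -/
def nω : N1 := ⟨⟨qω, star qω, qω_norm, qω_norm'⟩, qω_mem, qω_norm⟩
/-- `h = 4 + xy` as an element of `Λ^{N=1}`. -/
def nh : N1 := ⟨⟨qh, star qh, qh_norm, qh_norm'⟩, qh_mem, qh_norm⟩
/-- `γ = 4 + 5ω² − 2y` as an element of `Λ^{N=1}`. -/
def nγ : N1 := ⟨⟨qγ, star qγ, qγ_norm, qγ_norm'⟩, qγ_mem, qγ_norm⟩
/-- `−1` as an element of `Λ^{N=1}`. -/
def negOne : N1 := ⟨-1, by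
  refine ⟨?_, by simp⟩
  show ((-1 : (ℍ[ℚ, -3, 5])ˣ) : ℍ[ℚ, -3, 5]) ∈ Λ
  simp [Subring.neg_mem, Subring.one_mem]⟩

/-!
Every element of `Λ` is `a + bω + cy + dωy` with `a, b, c, d ∈ ℤ`. Over `𝔽₂` the matrices
`W = [[0,1],[1,1]]` and `Y = [[0,1],[1,0]]` satisfy the defining relations `W² + W + 1 = 0`,
`Y² = 1 = 5` and `YW = W²Y` of `ω` and `y`, so `a + bω + cy + dωy ↦ a + bW + cY + dWY` is a ring
homomorphism `ρ`; multiplicativity is checked on the reduced multiplication table. A norm-one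
element `u` of `Λ` has its inverse `star u` in `Λ`, so `ρ u ∈ GL₂(𝔽₂) ≅ S₃`, and `σ₂` is the sign
of the permutation of `𝔽₂²` by `ρ u`. Finally `ρ h = Y` swaps two nonzero vectors, while
`ρ γ = W²` and `ρ (-1) = 1` are even.
-/

/-- `a + bω + cy + dωy`. -/
def ofCoords (a b c d : ℤ) : ℍ[ℚ, -3, 5] := ⟨a - b / 2, b / 2, c - d / 2, d / 2⟩

lemma ofCoords_add (a b c d a' b' c' d' : ℤ) :
    ofCoords a b c d + ofCoords a' b' c' d' = ofCoords (a + a') (b + b') (c + c') (d + d') := by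
  ext <;> simp only [ofCoords, QuaternionAlgebra.mk_add_mk] <;> push_cast <;> ring

lemma ofCoords_neg (a b c d : ℤ) : -ofCoords a b c d = ofCoords (-a) (-b) (-c) (-d) := by
  ext <;> simp only [ofCoords, QuaternionAlgebra.neg_mk] <;> push_cast <;> ring

lemma ofCoords_mul (a b c d a' b' c' d' : ℤ) :
    ofCoords a b c d * ofCoords a' b' c' d' =
      ofCoords (a * a' - b * b' + 5 * c * c' - 5 * c * d' + 5 * d * d')
        (a * b' + b * a' - b * b' - 5 * c * d' + 5 * d * c')
        (a * c' - b * d' + c * a' - c * b' + d * b')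
        (a * d' + b * c' - b * d' - c * b' + d * a') := by
  ext <;> simp only [ofCoords, QuaternionAlgebra.mk_mul_mk] <;> push_cast <;> ring

lemma zero_eq_ofCoords : (0 : ℍ[ℚ, -3, 5]) = ofCoords 0 0 0 0 := by ext <;> simp [ofCoords]
lemma one_eq_ofCoords : (1 : ℍ[ℚ, -3, 5]) = ofCoords 1 0 0 0 := by ext <;> simp [ofCoords]
lemma neg_one_eq_ofCoords : (-1 : ℍ[ℚ, -3, 5]) = ofCoords (-1) 0 0 0 := by
  ext <;> simp [ofCoords]
lemma qω_eq_ofCoords : qω = ofCoords 0 1 0 0 := by ext <;> norm_num [qω, qx, ofCoords]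
lemma qy_eq_ofCoords : qy = ofCoords 0 0 1 0 := by ext <;> norm_num [qy, ofCoords]

lemma qh_eq_ofCoords : qh = ofCoords 4 0 1 2 := by
  ext <;> norm_num [qh, qx, qy, ofCoords, QuaternionAlgebra.re_ofNat, QuaternionAlgebra.imI_ofNat,
    QuaternionAlgebra.imJ_ofNat, QuaternionAlgebra.imK_ofNat]

lemma qγ_eq_ofCoords : qγ = ofCoords (-1) (-5) (-2) 0 := by
  ext <;> norm_num [qγ, qω, qx, qy, ofCoords, pow_two, QuaternionAlgebra.re_ofNat,
    QuaternionAlgebra.imI_ofNat, QuaternionAlgebra.imJ_ofNat, QuaternionAlgebra.imK_ofNat]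

lemma exists_ofCoords_of_mem_Λ {q : ℍ[ℚ, -3, 5]} (hq : q ∈ Λ) :
    ∃ a b c d : ℤ, q = ofCoords a b c d := by
  induction hq using Subring.closure_induction with
  | mem q hq =>
    rcases hq with rfl | rfl
    · exact ⟨0, 1, 0, 0, qω_eq_ofCoords⟩
    · exact ⟨0, 0, 1, 0, qy_eq_ofCoords⟩
  | zero => exact ⟨0, 0, 0, 0, zero_eq_ofCoords⟩
  | one => exact ⟨1, 0, 0, 0, one_eq_ofCoords⟩
  | add q p _ _ hq hp =>
    obtain ⟨a, b, c, d, rfl⟩ := hq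
    obtain ⟨a', b', c', d', rfl⟩ := hp
    exact ⟨_, _, _, _, ofCoords_add ..⟩
  | neg q _ hq =>
    obtain ⟨a, b, c, d, rfl⟩ := hq
    exact ⟨_, _, _, _, ofCoords_neg ..⟩
  | mul q p _ _ hq hp =>
    obtain ⟨a, b, c, d, rfl⟩ := hq
    obtain ⟨a', b', c', d', rfl⟩ := hp
    exact ⟨_, _, _, _, ofCoords_mul ..⟩

def levelTwoMatrix (a b c d : ZMod 2) : Matrix (Fin 2) (Fin 2) (ZMod 2) :=
  a • 1 + b • !![0, 1; 1, 1] + c • !![0, 1; 1, 0] + d • (!![0, 1; 1, 1] * !![0, 1; 1, 0])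

lemma levelTwoMatrix_add (a b c d a' b' c' d' : ZMod 2) :
    levelTwoMatrix (a + a') (b + b') (c + c') (d + d') =
      levelTwoMatrix a b c d + levelTwoMatrix a' b' c' d' := by
  simp only [levelTwoMatrix, add_smul]
  abel

set_option maxRecDepth 8000 in
lemma levelTwoMatrix_mul : ∀ a b c d a' b' c' d' : ZMod 2,
    levelTwoMatrix (a * a' - b * b' + 5 * c * c' - 5 * c * d' + 5 * d * d')
        (a * b' + b * a' - b * b' - 5 * c * d' + 5 * d * c')
        (a * c' - b * d' + c * a' - c * b' + d * b')
        (a * d' + b * c' - b * d' - c * b' + d * a') =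
      levelTwoMatrix a b c d * levelTwoMatrix a' b' c' d' := by
  decide

/-- Reduction mod 2 through the numerator, so only meaningful on integers. -/
def ratModTwo (r : ℚ) : ZMod 2 := r.num

/-- Reads off the coordinates of `q = a + bω + cy + dωy`: `a = re + imI`, `b = 2 imI`,
`c = imJ + imK`, `d = 2 imK`. -/
def levelTwoMatrixOf (q : ℍ[ℚ, -3, 5]) : Matrix (Fin 2) (Fin 2) (ZMod 2) :=
  levelTwoMatrix (ratModTwo (q.re + q.imI)) (ratModTwo (2 * q.imI)) (ratModTwo (q.imJ + q.imK))
    (ratModTwo (2 * q.imK))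

lemma levelTwoMatrixOf_ofCoords (a b c d : ℤ) :
    levelTwoMatrixOf (ofCoords a b c d) = levelTwoMatrix a b c d := by
  have coord (n : ℤ) : ratModTwo n = n := by simp [ratModTwo]
  have twice_half (x : ℚ) : 2 * (x / 2) = x := by ring
  simp only [levelTwoMatrixOf, ofCoords, sub_add_cancel, twice_half, coord]

def levelTwoRep : Λ →+* Matrix (Fin 2) (Fin 2) (ZMod 2) where
  toFun q := levelTwoMatrixOf q
  map_one' := by
    rw [Subring.coe_one, one_eq_ofCoords, levelTwoMatrixOf_ofCoords]
    decide
  map_zero' := by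
    rw [Subring.coe_zero, zero_eq_ofCoords, levelTwoMatrixOf_ofCoords]
    decide
  map_add' q p := by
    obtain ⟨a, b, c, d, hq⟩ := exists_ofCoords_of_mem_Λ q.2
    obtain ⟨a', b', c', d', hp⟩ := exists_ofCoords_of_mem_Λ p.2
    rw [Subring.coe_add, hq, hp, ofCoords_add]
    simp only [levelTwoMatrixOf_ofCoords, Int.cast_add, levelTwoMatrix_add]
  map_mul' q p := by
    obtain ⟨a, b, c, d, hq⟩ := exists_ofCoords_of_mem_Λ q.2
    obtain ⟨a', b', c', d', hp⟩ := exists_ofCoords_of_mem_Λ p.2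
    rw [Subring.coe_mul, hq, hp, ofCoords_mul]
    push_cast [levelTwoMatrixOf_ofCoords]
    exact levelTwoMatrix_mul ..

lemma levelTwoRep_apply_of_eq {q : Λ} {a b c d : ℤ}
    (hq : (q : ℍ[ℚ, -3, 5]) = ofCoords a b c d) :
    levelTwoRep q = levelTwoMatrix a b c d :=
  (congrArg levelTwoMatrixOf hq).trans (levelTwoMatrixOf_ofCoords a b c d)

def Matrix.GeneralLinearGroup.permSign (n K : Type*) [Fintype n] [DecidableEq n] [CommRing K]
    [Fintype K] [DecidableEq K] : GL n K →* ℤˣ :=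
  Equiv.Perm.sign.comp (MulAction.toPermHom (GL n K) (n → K))

def Int.unitsToMultiplicativeZModTwo : ℤˣ →* Multiplicative (ZMod 2) where
  toFun u := Multiplicative.ofAdd (if u = 1 then 0 else 1)
  map_one' := rfl
  map_mul' := by decide

lemma N1_le_units : N1 ≤ Λ.toSubmonoid.units := fun _ hu => ⟨hu.1, (N1.inv_mem hu).1⟩

def N1.toUnits : N1 →* Λˣ :=
  (Submonoid.unitsEquivUnitsType _).toMonoidHom.comp (Subgroup.inclusion N1_le_units)

def levelTwoSign : N1 →* Multiplicative (ZMod 2) :=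
  Int.unitsToMultiplicativeZModTwo.comp <|
    (Matrix.GeneralLinearGroup.permSign (Fin 2) (ZMod 2)).comp <|
      (Units.map levelTwoRep.toMonoidHom).comp N1.toUnits

lemma levelTwoSign_apply_of_eq {u : N1} {a b c d : ℤ}
    (hu : ((u : (ℍ[ℚ, -3, 5])ˣ) : ℍ[ℚ, -3, 5]) = ofCoords a b c d)
    {g : GL (Fin 2) (ZMod 2)}
    (hg : (g : Matrix (Fin 2) (Fin 2) (ZMod 2)) = levelTwoMatrix a b c d) :
    levelTwoSign u =
      Int.unitsToMultiplicativeZModTwo (Matrix.GeneralLinearGroup.permSign (Fin 2) (ZMod 2) g) := by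
  have : Units.map levelTwoRep.toMonoidHom (N1.toUnits u) = g :=
    Units.ext ((levelTwoRep_apply_of_eq hu).trans hg.symm)
  rw [levelTwoSign, MonoidHom.comp_apply, MonoidHom.comp_apply, MonoidHom.comp_apply, this]

theorem exists_level_two_cover_homomorphism :
    (∃ ρ : Λ →+* Matrix (Fin 2) (Fin 2) (ZMod 2),
      ρ ⟨qω, qω_mem⟩ = !![0, 1; 1, 1] ∧ ρ ⟨qy, qy_mem⟩ = !![0, 1; 1, 0]) ∧
    ∃ σ₂ : N1 →* Multiplicative (ZMod 2),
      σ₂ nh = Multiplicative.ofAdd (1 : ZMod 2) ∧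
      σ₂ nγ = Multiplicative.ofAdd (0 : ZMod 2) ∧
      σ₂ negOne = Multiplicative.ofAdd (0 : ZMod 2) ∧
      σ₂ ≠ 1 := by
  have hω : levelTwoRep ⟨qω, qω_mem⟩ = !![0, 1; 1, 1] :=
    (levelTwoRep_apply_of_eq qω_eq_ofCoords).trans (by decide)
  have hy : levelTwoRep ⟨qy, qy_mem⟩ = !![0, 1; 1, 0] :=
    (levelTwoRep_apply_of_eq qy_eq_ofCoords).trans (by decide)
  have hh : levelTwoSign nh = Multiplicative.ofAdd 1 :=
    (levelTwoSign_apply_of_eq (g := ⟨!![0, 1; 1, 0], !![0, 1; 1, 0], by decide, by decide⟩)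
      qh_eq_ofCoords (by decide)).trans (by decide)
  have hγ : levelTwoSign nγ = Multiplicative.ofAdd 0 :=
    (levelTwoSign_apply_of_eq (g := ⟨!![1, 1; 1, 0], !![0, 1; 1, 1], by decide, by decide⟩)
      qγ_eq_ofCoords (by decide)).trans (by decide)
  have hneg : levelTwoSign negOne = Multiplicative.ofAdd 0 :=
    (levelTwoSign_apply_of_eq (g := 1) neg_one_eq_ofCoords (by decide)).trans (by decide)
  refine ⟨⟨levelTwoRep, hω, hy⟩, levelTwoSign, hh, hγ, hneg, fun h => ?_⟩
  rw [h] at hh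
  exact absurd hh (by decide)
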